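/- Under the hypotheses of the fixed-steplength theorem (μ-strong convexity, L-smoothness, ‖e(x)‖ ≤ ε̄_g, step α ≤ 1/L), the iterates satisfy the R-linear bound φ(x_k) − φ⋆ ≤ (1 − αμ)^k (φ(x_0) − φ⋆ − ε̄_g²/(2μ)) + ε̄_g²/(2μ) for all k ≥ 0. -/

import Mathlib

/-!
Along a segment, the Hessian bounds give quadratic upper and lower Taylor bounds. Minimising the
lower one over the far endpoint gives the Polyak–Łojasiewicz inequality
`2μ (φ x - φ p) ≤ ‖∇φ x‖²` for every `p`; the upper one, for the inexact step with `αL ≤ 1`, gives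
`φ x⁺ ≤ φ x - α/2 ‖∇φ x‖² + α/2 ‖e‖²`. Hence the gap `φ xₖ - φ x⋆` contracts by `1 - αμ` up to
an additive `α ε²/2 = αμ · ε²/(2μ)`, and unrolling this affine recursion gives the bound.
-/

open Set

theorem le_add_deriv_add_half_of_hasDerivAt_of_le {f f' f'' : ℝ → ℝ} {K : ℝ}
    (hf : ∀ t, HasDerivAt f (f' t) t) (hf' : ∀ t, HasDerivAt f' (f'' t) t)
    (hK : ∀ t, f'' t ≤ K) : f 1 ≤ f 0 + f' 0 + K / 2 := by
  have hslope : Monotone fun t => K * t - f' t :=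
    monotone_of_hasDerivAt_nonneg (fun t => ((hasDerivAt_id t).const_mul K).sub (hf' t))
      fun t => by simpa using hK t
  have hgap : ∀ t, HasDerivAt (fun t => t * f' 0 + K / 2 * t ^ 2 - f t)
      (f' 0 + K * t - f' t) t := fun t => by
    have := (((hasDerivAt_id t).mul_const (f' 0)).add
      ((hasDerivAt_pow 2 t).const_mul (K / 2))).sub (hf t)
    exact this.congr_deriv (by norm_num; ring)
  have hmono : MonotoneOn (fun t => t * f' 0 + K / 2 * t ^ 2 - f t) (Ici 0) :=
    monotoneOn_of_hasDerivWithinAt_nonneg (convex_Ici 0)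
      (continuous_iff_continuousAt.2 fun t => (hgap t).continuousAt).continuousOn
      (fun t _ => (hgap t).hasDerivWithinAt)
      fun t ht => by
        rw [interior_Ici, mem_Ioi] at ht
        have := hslope ht.le
        simp only at this
        linarith
  have := hmono (mem_Ici.2 le_rfl) (mem_Ici.2 zero_le_one) zero_le_one
  simp only at this
  linarith

variable {E : Type*} [NormedAddCommGroup E] [NormedSpace ℝ E]

theorem ContDiff.le_add_fderiv_add_of_iteratedFDeriv_two_le {f : E → ℝ} (hf : ContDiff ℝ 2 f)
    {C : ℝ} (hC : ∀ z v, iteratedFDeriv ℝ 2 f z ![v, v] ≤ C * ‖v‖ ^ 2) (x y : E) :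
    f y ≤ f x + fderiv ℝ f x (y - x) + C / 2 * ‖y - x‖ ^ 2 := by
  set v := y - x
  have hline : ∀ t : ℝ, HasDerivAt (fun t : ℝ => x + t • v) v t := fun t => by
    simpa using ((hasDerivAt_id t).smul_const v).const_add x
  have hf1 : ∀ t : ℝ, HasDerivAt (fun t => f (x + t • v)) (fderiv ℝ f (x + t • v) v) t := fun t =>
    ((hf.differentiable two_ne_zero) _).hasFDerivAt.comp_hasDerivAt t (hline t)
  have hf2 : ∀ t : ℝ, HasDerivAt (fun t => fderiv ℝ f (x + t • v) v)
      (fderiv ℝ (fderiv ℝ f) (x + t • v) v v) t := fun t => by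
    have hD : HasDerivAt (fun t => fderiv ℝ f (x + t • v))
        (fderiv ℝ (fderiv ℝ f) (x + t • v) v) t :=
      ((hf.fderiv_right (m := 1) le_rfl).differentiable one_ne_zero _).hasFDerivAt.comp_hasDerivAt
        t (hline t)
    simpa using hD.clm_apply (hasDerivAt_const t v)
  have := le_add_deriv_add_half_of_hasDerivAt_of_le hf1 hf2 fun t => by
    simpa [iteratedFDeriv_two_apply] using hC (x + t • v) v
  simp only [one_smul, zero_smul, add_zero, v, add_sub_cancel] at this
  linarith

theorem ContDiff.add_fderiv_add_le_of_le_iteratedFDeriv_two {f : E → ℝ} (hf : ContDiff ℝ 2 f)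
    {c : ℝ} (hc : ∀ z v, c * ‖v‖ ^ 2 ≤ iteratedFDeriv ℝ 2 f z ![v, v]) (x y : E) :
    f x + fderiv ℝ f x (y - x) + c / 2 * ‖y - x‖ ^ 2 ≤ f y := by
  have := ContDiff.le_add_fderiv_add_of_iteratedFDeriv_two_le (f := -f) hf.neg (C := -c)
    (fun z v => by rw [iteratedFDeriv_neg_apply, neg_apply]; linarith [hc z v]) x y
  simp only [fderiv_neg, Pi.neg_apply, neg_apply] at this
  linarith

variable {F : Type*} [NormedAddCommGroup F] [InnerProductSpace ℝ F] [CompleteSpace F]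

theorem ContDiff.two_mul_sub_le_sq_norm_gradient {f : F → ℝ} (hf : ContDiff ℝ 2 f) {μ : ℝ}
    (hμ : 0 ≤ μ) (hf₂ : ∀ z v, μ * ‖v‖ ^ 2 ≤ iteratedFDeriv ℝ 2 f z ![v, v]) (x p : F) :
    2 * μ * (f x - f p) ≤ ‖gradient f x‖ ^ 2 := by
  have hlow := hf.add_fderiv_add_le_of_le_iteratedFDeriv_two hf₂ x p
  rw [← inner_gradient_left] at hlow
  have hsq : 0 ≤ ‖μ • (p - x) + gradient f x‖ ^ 2 := sq_nonneg _
  rw [norm_add_sq_real, norm_smul, mul_pow, Real.norm_eq_abs, sq_abs, real_inner_smul_left,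
    real_inner_comm] at hsq
  nlinarith

theorem ContDiff.le_sub_half_sq_norm_gradient_add {f : F → ℝ} (hf : ContDiff ℝ 2 f) {L α : ℝ}
    (hf₂ : ∀ z v, iteratedFDeriv ℝ 2 f z ![v, v] ≤ L * ‖v‖ ^ 2) (hα : 0 ≤ α) (hαL : α * L ≤ 1)
    (x e : F) :
    f (x - α • (gradient f x + e)) ≤ f x - α / 2 * ‖gradient f x‖ ^ 2 + α / 2 * ‖e‖ ^ 2 := by
  have hup := hf.le_add_fderiv_add_of_iteratedFDeriv_two_le hf₂ x (x - α • (gradient f x + e))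
  rw [← inner_gradient_left, sub_sub_cancel_left, inner_neg_right, real_inner_smul_right,
    norm_neg, norm_smul, mul_pow, Real.norm_eq_abs, sq_abs, inner_add_right,
    real_inner_self_eq_norm_sq] at hup
  have hLα : L * α ^ 2 ≤ α := by nlinarith
  have hexp := norm_add_sq_real (gradient f x) e
  nlinarith [mul_le_mul_of_nonneg_right hLα (sq_nonneg ‖gradient f x + e‖)]

theorem le_pow_mul_sub_add_of_le_mul_add {r : ℕ → ℝ} {q c : ℝ} (hq : 0 ≤ q)
    (h : ∀ k, r (k + 1) ≤ q * r k + (1 - q) * c) (k : ℕ) : r k ≤ q ^ k * (r 0 - c) + c := by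
  induction k with
  | zero => simp
  | succ k ih =>
    calc r (k + 1) ≤ q * r k + (1 - q) * c := h k
      _ ≤ q * (q ^ k * (r 0 - c) + c) + (1 - q) * c := by gcongr
      _ = q ^ (k + 1) * (r 0 - c) + c := by ring

theorem fixed_step_R_linear_convergence_general
    (n : ℕ) (φ : EuclideanSpace ℝ (Fin n) → ℝ)
    (μ L : ℝ) (hμ : 0 < μ) (hμL : μ ≤ L)
    (hφ : ContDiff ℝ 2 φ)
    (hHessLower : ∀ x v : EuclideanSpace ℝ (Fin n),
      μ * ‖v‖ ^ 2 ≤ (iteratedFDeriv ℝ 2 φ x) ![v, v])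
    (hHessUpper : ∀ x v : EuclideanSpace ℝ (Fin n),
      (iteratedFDeriv ℝ 2 φ x) ![v, v] ≤ L * ‖v‖ ^ 2)
    (xstar : EuclideanSpace ℝ (Fin n))
    (e : EuclideanSpace ℝ (Fin n) → EuclideanSpace ℝ (Fin n))
    (εg : ℝ) (he : ∀ x, ‖e x‖ ≤ εg)
    (α : ℝ) (hα : 0 < α) (hαL : α ≤ 1 / L)
    (x g : ℕ → EuclideanSpace ℝ (Fin n))
    (hg : ∀ k, g k = gradient φ (x k) + e (x k))
    (hx : ∀ k, x (k + 1) = x k - α • g k) :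
    ∀ k, φ (x k) - φ xstar ≤
      (1 - α * μ) ^ k * (φ (x 0) - φ xstar - εg ^ 2 / (2 * μ)) + εg ^ 2 / (2 * μ) := by
  have hαL' : α * L ≤ 1 := (le_div_iff₀ (hμ.trans_le hμL)).1 hαL
  have hαμ : α * μ ≤ 1 := (mul_le_mul_of_nonneg_left hμL hα.le).trans hαL'
  refine le_pow_mul_sub_add_of_le_mul_add (sub_nonneg.2 hαμ) fun k => ?_
  have hdescent := hφ.le_sub_half_sq_norm_gradient_add hHessUpper hα.le hαL' (x k) (e (x k))
  have hPL := hφ.two_mul_sub_le_sq_norm_gradient hμ.le hHessLower (x k) xstar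
  have hnoise : ‖e (x k)‖ ^ 2 ≤ εg ^ 2 := pow_le_pow_left₀ (norm_nonneg _) (he _) 2
  have hneighborhood : (1 - (1 - α * μ)) * (εg ^ 2 / (2 * μ)) = α / 2 * εg ^ 2 := by
    field_simp
    ring
  rw [hx k, hg k, hneighborhood]
  linarith [mul_le_mul_of_nonneg_left hPL hα.le, mul_le_mul_of_nonneg_left hnoise hα.le]

/-- R-linear convergence of the fixed-steplength method to a noise neighborhood. -/
theorem fixed_step_R_linear_convergence
    (n : ℕ) (φ : EuclideanSpace ℝ (Fin n) → ℝ)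
    (μ L : ℝ) (hμ : 0 < μ) (hμL : μ ≤ L)
    (hφ : ContDiff ℝ 2 φ)
    (hHessLower : ∀ x v : EuclideanSpace ℝ (Fin n),
      μ * ‖v‖ ^ 2 ≤ (iteratedFDeriv ℝ 2 φ x) ![v, v])
    (hHessUpper : ∀ x v : EuclideanSpace ℝ (Fin n),
      (iteratedFDeriv ℝ 2 φ x) ![v, v] ≤ L * ‖v‖ ^ 2)
    (xstar : EuclideanSpace ℝ (Fin n)) (hmin : ∀ x, φ xstar ≤ φ x)
    (e : EuclideanSpace ℝ (Fin n) → EuclideanSpace ℝ (Fin n))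
    (εg : ℝ) (hεg : 0 < εg) (he : ∀ x, ‖e x‖ ≤ εg)
    (α : ℝ) (hα : 0 < α) (hαL : α ≤ 1 / L)
    (x g : ℕ → EuclideanSpace ℝ (Fin n))
    (hg : ∀ k, g k = gradient φ (x k) + e (x k))
    (hx : ∀ k, x (k + 1) = x k - α • g k) :
    ∀ k, φ (x k) - φ xstar ≤
      (1 - α * μ) ^ k * (φ (x 0) - φ xstar - εg ^ 2 / (2 * μ)) + εg ^ 2 / (2 * μ) :=
  fixed_step_R_linear_convergence_general n φ μ L hμ hμL hφ hHessLower hHessUpper xstar e εg he α hα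
    hαL x g hg hx
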